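/- arXiv:2302.02475 — 4 statements merged into one kernel-verified Lean document; each statement's English description precedes it below -/
import Mathlib

section
/- Let f be a non-negative measurable function on a measurable set E ⊂ ℝ^n of finite measure, and let φ be a non-negative, strictly decreasing continuous function on an interval containing the range f(E). Then for ψ := φ ∘ f, the equality ψ^*(t) = φ(f^*(|E| - t)) holds for almost all t ∈ (0, |E|). -/
/-! Write `M = |E|`, `ψ = φ ∘ f` and, for `0 < t < M`, `a = f^*(M - t)`. Then `a ∈ I`, and
continuity of the measure along monotone families of level sets gives
`|{f < a}| ≤ t ≤ |{f ≤ a}|`. As `φ` is antitone, `{ψ > b} ⊆ {f < a}` for `b > φ a`, whence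
`ψ^*(t) ≤ φ(f^*(M - t))`, while `{f ≤ a} ⊆ {ψ ≥ φ a}` gives `φ(f^*(M - t₂)) ≤ ψ^*(t₁)` whenever
`t₁ < t₂`. So the open intervals `(ψ^*(t), φ(f^*(M - t)))` are pairwise disjoint, and only
countably many of them are nonempty. -/

open MeasureTheory Set

/-- Non-increasing rearrangement of `g` restricted to `E`. -/
noncomputable def rearrOn {α : Type*} [MeasureSpace α] (E : Set α) (g : α → ℝ) (t : ℝ) : ℝ :=
  sInf {a : ℝ | 0 < a ∧ volume {x ∈ E | a < |g x|} ≤ ENNReal.ofReal t}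

open Filter Topology

lemma countable_sep_lt_of_forall_lt_imp_le {α : Type*} [LinearOrder α] {S : Set α}
    {h k : α → ℝ} (hkh : ∀ t₁ ∈ S, ∀ t₂ ∈ S, t₁ < t₂ → k t₂ ≤ h t₁) :
    {t ∈ S | h t < k t}.Countable := by
  have hdisj : ∀ t₁ ∈ S, ∀ t₂ ∈ S, t₁ < t₂ → Disjoint (Ioo (h t₁) (k t₁)) (Ioo (h t₂) (k t₂)) :=
    fun t₁ ht₁ t₂ ht₂ h₁₂ => disjoint_left.2 fun _ hz₁ hz₂ =>
      (hz₂.2.trans_le (hkh t₁ ht₁ t₂ ht₂ h₁₂)).not_gt hz₁.1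
  refine PairwiseDisjoint.countable_of_isOpen (s := fun t => Ioo (h t) (k t))
    (fun t₁ ht₁ t₂ ht₂ hne => ?_) (fun _ _ => isOpen_Ioo) (fun _ ht => nonempty_Ioo.2 ht.2)
  rcases hne.lt_or_gt with h₁₂ | h₂₁
  · exact hdisj t₁ ht₁.1 t₂ ht₂.1 h₁₂
  · exact (hdisj t₂ ht₂.1 t₁ ht₁.1 h₂₁).symm

lemma measurableSet_sep_lt_abs {α : Type*} [MeasurableSpace α] {E : Set α} {g : α → ℝ}
    (hE : MeasurableSet E) (hg : Measurable g) (a : ℝ) : MeasurableSet {x ∈ E | a < |g x|} :=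
  hE.inter (measurableSet_lt measurable_const hg.abs)

section Rearrangement

variable {α : Type*} [MeasureSpace α] {E : Set α} {g : α → ℝ} {t : ℝ}

lemma measure_sep_not (hE : volume E ≠ ⊤) {p : α → Prop} (hp : MeasurableSet {x ∈ E | p x}) :
    volume {x ∈ E | ¬ p x} = volume E - volume {x ∈ E | p x} := by
  rw [← sdiff_sep_self, measure_sdiff (sep_subset _ _) hp.nullMeasurableSet
    (ne_top_of_le_ne_top hE (measure_mono (sep_subset _ _)))]

lemma rearrOn_nonneg (E : Set α) (g : α → ℝ) (t : ℝ) : 0 ≤ rearrOn E g t :=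
  Real.sInf_nonneg fun _ ha => ha.1.le

lemma rearrOn_le {a : ℝ} (ha : 0 < a) (h : volume {x ∈ E | a < |g x|} ≤ ENNReal.ofReal t) :
    rearrOn E g t ≤ a :=
  csInf_le ⟨0, fun _ hb => hb.1.le⟩ ⟨ha, h⟩

lemma ofReal_lt_measure_of_lt_rearrOn {a : ℝ} (ha : 0 < a) (h : a < rearrOn E g t) :
    ENNReal.ofReal t < volume {x ∈ E | a < |g x|} :=
  not_le.1 fun h' => (rearrOn_le ha h').not_gt h

-- Without this the set in `rearrOn` could be empty, with junk value `sInf ∅ = 0`.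
lemma exists_pos_measure_sep_lt_abs_le (hEfin : volume E < ⊤)
    (hg : ∀ a, MeasurableSet {x ∈ E | a < |g x|}) (ht : 0 < t) :
    ∃ a, 0 < a ∧ volume {x ∈ E | a < |g x|} ≤ ENNReal.ofReal t := by
  have hanti : Antitone fun a : ℝ => {x ∈ E | a < |g x|} :=
    fun a b hab x hx => ⟨hx.1, hab.trans_lt hx.2⟩
  have hempty : ⋂ a : ℝ, {x ∈ E | a < |g x|} = ∅ :=
    eq_empty_of_forall_notMem fun x hx => lt_irrefl _ (mem_iInter.1 hx |g x|).2
  have htend := tendsto_measure_iInter_atTop (fun a => (hg a).nullMeasurableSet) hanti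
    ⟨0, ((measure_mono (sep_subset _ _)).trans_lt hEfin).ne⟩
  rw [hempty, measure_empty] at htend
  obtain ⟨a, ha, hlt⟩ :=
    ((eventually_gt_atTop 0).and (htend.eventually_lt_const (ENNReal.ofReal_pos.2 ht))).exists
  exact ⟨a, ha, hlt.le⟩

lemma measure_sep_lt_abs_le_of_rearrOn_lt (hEfin : volume E < ⊤)
    (hg : ∀ a, MeasurableSet {x ∈ E | a < |g x|}) (ht : 0 < t) {a : ℝ} (h : rearrOn E g t < a) :
    volume {x ∈ E | a < |g x|} ≤ ENNReal.ofReal t := by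
  obtain ⟨b, ⟨-, hb⟩, hba⟩ :=
    (csInf_lt_iff ⟨0, fun _ hb => hb.1.le⟩ (exists_pos_measure_sep_lt_abs_le hEfin hg ht)).1 h
  exact hb.trans' (measure_mono fun x hx => ⟨hx.1, hba.trans hx.2⟩)

lemma measure_sep_rearrOn_lt_abs_le (hEfin : volume E < ⊤)
    (hg : ∀ a, MeasurableSet {x ∈ E | a < |g x|}) (ht : 0 < t) :
    volume {x ∈ E | rearrOn E g t < |g x|} ≤ ENNReal.ofReal t := by
  obtain ⟨u, hu_anti, hu_gt, hu_tend⟩ := exists_seq_strictAnti_tendsto (rearrOn E g t)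
  have hunion : {x ∈ E | rearrOn E g t < |g x|} = ⋃ n, {x ∈ E | u n < |g x|} := by
    ext x
    simp only [mem_sep_iff, mem_iUnion]
    constructor
    · rintro ⟨hxE, hx⟩
      obtain ⟨n, hn⟩ := (hu_tend.eventually_lt_const hx).exists
      exact ⟨n, hxE, hn⟩
    · rintro ⟨n, hxE, hx⟩
      exact ⟨hxE, (hu_gt n).trans hx⟩
  have hmono : Monotone fun n => {x ∈ E | u n < |g x|} :=
    fun m n hmn x hx => ⟨hx.1, (hu_anti.antitone hmn).trans_lt hx.2⟩
  rw [hunion, hmono.measure_iUnion]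
  exact iSup_le fun n => measure_sep_lt_abs_le_of_rearrOn_lt hEfin hg ht (hu_gt n)

lemma ofReal_sub_le_measure_sep_abs_le_rearrOn (hEfin : volume E < ⊤)
    (hg : ∀ a, MeasurableSet {x ∈ E | a < |g x|}) (ht : 0 < t) :
    ENNReal.ofReal ((volume E).toReal - t) ≤ volume {x ∈ E | |g x| ≤ rearrOn E g t} := by
  rw [show {x ∈ E | |g x| ≤ rearrOn E g t} = {x ∈ E | ¬ rearrOn E g t < |g x|} by
    simp_rw [not_lt], measure_sep_not hEfin.ne (hg _), ENNReal.ofReal_sub _ ht.le,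
    ENNReal.ofReal_toReal hEfin.ne]
  exact tsub_le_tsub_left (measure_sep_rearrOn_lt_abs_le hEfin hg ht) _

lemma measure_sep_abs_lt_rearrOn_le (hEfin : volume E < ⊤)
    (hg : ∀ a, MeasurableSet {x ∈ E | a < |g x|}) (ht : 0 < t) :
    volume {x ∈ E | |g x| < rearrOn E g t} ≤ ENNReal.ofReal ((volume E).toReal - t) := by
  rcases (rearrOn_nonneg E g t).eq_or_lt with h0 | hpos
  · simp [← h0, (abs_nonneg _).not_gt]
  obtain ⟨u, hu_mono, hu_mem, hu_tend⟩ := exists_seq_strictMono_tendsto' hpos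
  have hunion : {x ∈ E | |g x| < rearrOn E g t} = ⋃ n, {x ∈ E | ¬ u n < |g x|} := by
    ext x
    simp only [mem_sep_iff, mem_iUnion, not_lt]
    constructor
    · rintro ⟨hxE, hx⟩
      obtain ⟨n, hn⟩ := (hu_tend.eventually_const_lt hx).exists
      exact ⟨n, hxE, hn.le⟩
    · rintro ⟨n, hxE, hx⟩
      exact ⟨hxE, hx.trans_lt (hu_mem n).2⟩
  have hmono : Monotone fun n => {x ∈ E | ¬ u n < |g x|} :=
    fun m n hmn x hx => ⟨hx.1, fun h => hx.2 ((hu_mono.monotone hmn).trans_lt h)⟩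
  rw [hunion, hmono.measure_iUnion, ENNReal.ofReal_sub _ ht.le, ENNReal.ofReal_toReal hEfin.ne]
  refine iSup_le fun n => ?_
  rw [measure_sep_not hEfin.ne (hg _)]
  exact tsub_le_tsub_left (ofReal_lt_measure_of_lt_rearrOn (hu_mem n).1 (hu_mem n).2).le _

lemma rearrOn_mem_of_ordConnected (hEfin : volume E < ⊤)
    (hg : ∀ a, MeasurableSet {x ∈ E | a < |g x|}) (hg0 : ∀ x ∈ E, 0 ≤ g x) {I : Set ℝ}
    (hI : I.OrdConnected) (hrange : g '' E ⊆ I) (ht0 : 0 < t) (htE : t < (volume E).toReal) :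
    rearrOn E g t ∈ I := by
  have hlt : ENNReal.ofReal ((volume E).toReal - t) < volume E :=
    (ENNReal.ofReal_lt_iff_lt_toReal (sub_pos.2 htE).le hEfin.ne).2 (sub_lt_self _ ht0)
  obtain ⟨x, hxE, hx⟩ : {x ∈ E | |g x| ≤ rearrOn E g t}.Nonempty :=
    nonempty_of_measure_ne_zero ((ENNReal.ofReal_pos.2 (sub_pos.2 htE)).trans_le
      (ofReal_sub_le_measure_sep_abs_le_rearrOn hEfin hg ht0)).ne'
  obtain ⟨y, hyE, hy⟩ : ∃ y ∈ E, rearrOn E g t ≤ |g y| := by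
    by_contra! h
    exact hlt.not_ge ((measure_sep_abs_lt_rearrOn_le hEfin hg ht0).trans'
      (measure_mono fun y hy => ⟨hy, h y hy⟩))
  rw [abs_of_nonneg (hg0 x hxE)] at hx
  rw [abs_of_nonneg (hg0 y hyE)] at hy
  exact hI.out (hrange ⟨x, hxE, rfl⟩) (hrange ⟨y, hyE, rfl⟩) ⟨hx, hy⟩

section Composition

variable {f : α → ℝ} {I : Set ℝ} {φ : ℝ → ℝ}

lemma AntitoneOn.measurableSet_sep_lt_abs_comp (hφ : AntitoneOn φ I) (hE : MeasurableSet E)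
    (hf : Measurable f) (hI : I.OrdConnected) (hrange : f '' E ⊆ I) (hφ0 : ∀ y ∈ I, 0 ≤ φ y)
    (b : ℝ) : MeasurableSet {x ∈ E | b < |(φ ∘ f) x|} := by
  have hord : {z ∈ I | b < φ z}.OrdConnected :=
    ⟨fun z₁ hz₁ z₂ hz₂ z hz => ⟨hI.out hz₁.1 hz₂.1 hz,
      hz₂.2.trans_le (hφ (hI.out hz₁.1 hz₂.1 hz) hz₂.1 hz.2)⟩⟩
  have hset : {x ∈ E | b < |(φ ∘ f) x|} = E ∩ f ⁻¹' {z ∈ I | b < φ z} := by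
    ext x
    simp only [mem_sep_iff, mem_inter_iff, mem_preimage, Function.comp_apply]
    refine and_congr_right fun hx => ?_
    have hfx := hrange (mem_image_of_mem f hx)
    rw [abs_of_nonneg (hφ0 _ hfx)]
    exact ⟨fun h => ⟨hfx, h⟩, And.right⟩
  rw [hset]
  exact hE.inter (hf hord.measurableSet)

lemma AntitoneOn.rearrOn_comp_le (hφ : AntitoneOn φ I) (hE : MeasurableSet E)
    (hEfin : volume E < ⊤) (hf : Measurable f) (hf0 : ∀ x ∈ E, 0 ≤ f x) (hI : I.OrdConnected)
    (hrange : f '' E ⊆ I) (hφ0 : ∀ y ∈ I, 0 ≤ φ y) (ht0 : 0 < t)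
    (htE : t < (volume E).toReal) :
    rearrOn E (φ ∘ f) t ≤ φ (rearrOn E f ((volume E).toReal - t)) := by
  set a := rearrOn E f ((volume E).toReal - t)
  have hfm := measurableSet_sep_lt_abs hE hf
  have haI : a ∈ I := rearrOn_mem_of_ordConnected hEfin hfm hf0 hI hrange (sub_pos.2 htE)
    (sub_lt_self _ ht0)
  have hsmall : volume {x ∈ E | |f x| < a} ≤ ENNReal.ofReal t := by
    simpa only [sub_sub_cancel] using measure_sep_abs_lt_rearrOn_le hEfin hfm (sub_pos.2 htE)
  refine le_of_forall_gt_imp_ge_of_dense fun b hb => rearrOn_le ((hφ0 a haI).trans_lt hb)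
    (hsmall.trans' (measure_mono fun x hx => ⟨hx.1, ?_⟩))
  have hfx := hrange (mem_image_of_mem f hx.1)
  have hbx := hx.2
  rw [Function.comp_apply, abs_of_nonneg (hφ0 _ hfx)] at hbx
  rw [abs_of_nonneg (hf0 x hx.1)]
  by_contra! hax
  exact (hφ haI hfx hax).not_gt (hb.trans hbx)

lemma AntitoneOn.le_rearrOn_comp_of_lt (hφ : AntitoneOn φ I) (hE : MeasurableSet E)
    (hEfin : volume E < ⊤) (hf : Measurable f) (hf0 : ∀ x ∈ E, 0 ≤ f x) (hI : I.OrdConnected)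
    (hrange : f '' E ⊆ I) (hφ0 : ∀ y ∈ I, 0 ≤ φ y) {t₁ t₂ : ℝ} (ht₁ : 0 < t₁) (h₁₂ : t₁ < t₂)
    (ht₂ : t₂ < (volume E).toReal) :
    φ (rearrOn E f ((volume E).toReal - t₂)) ≤ rearrOn E (φ ∘ f) t₁ := by
  set a := rearrOn E f ((volume E).toReal - t₂)
  have hfm := measurableSet_sep_lt_abs hE hf
  have haI : a ∈ I := rearrOn_mem_of_ordConnected hEfin hfm hf0 hI hrange (sub_pos.2 ht₂)
    (sub_lt_self _ (ht₁.trans h₁₂))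
  have hlarge : ENNReal.ofReal t₂ ≤ volume {x ∈ E | |f x| ≤ a} := by
    simpa only [sub_sub_cancel] using
      ofReal_sub_le_measure_sep_abs_le_rearrOn hEfin hfm (sub_pos.2 ht₂)
  refine le_csInf (exists_pos_measure_sep_lt_abs_le hEfin
    (hφ.measurableSet_sep_lt_abs_comp hE hf hI hrange hφ0) ht₁) ?_
  rintro b ⟨-, hb⟩
  by_contra! hba
  have hsub : {x ∈ E | |f x| ≤ a} ⊆ {x ∈ E | b < |(φ ∘ f) x|} := by
    rintro x ⟨hxE, hx⟩
    have hfx := hrange (mem_image_of_mem f hxE)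
    rw [abs_of_nonneg (hf0 x hxE)] at hx
    refine ⟨hxE, ?_⟩
    rw [Function.comp_apply, abs_of_nonneg (hφ0 _ hfx)]
    exact hba.trans_le (hφ hfx haI hx)
  exact ((ENNReal.ofReal_lt_ofReal_iff_of_nonneg ht₁.le).2 h₁₂).not_ge
    (hlarge.trans ((measure_mono hsub).trans hb))

end Composition

end Rearrangement

theorem stmt_3_general {n : ℕ} (E : Set (Fin n → ℝ)) (hE : MeasurableSet E)
    (hEfin : volume E < ⊤)
    (f : (Fin n → ℝ) → ℝ) (hfmeas : Measurable f) (hfnonneg : ∀ x ∈ E, 0 ≤ f x)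
    (I : Set ℝ) (hI : I.OrdConnected) (hrange : f '' E ⊆ I)
    (φ : ℝ → ℝ) (hφanti : StrictAntiOn φ I)
    (hφnonneg : ∀ y ∈ I, 0 ≤ φ y) :
    ∀ᵐ t ∂(volume.restrict (Ioo (0 : ℝ) (volume E).toReal)),
      rearrOn E (φ ∘ f) t = φ (rearrOn E f ((volume E).toReal - t)) := by
  have hcount : {t ∈ Ioo 0 (volume E).toReal |
      rearrOn E (φ ∘ f) t < φ (rearrOn E f ((volume E).toReal - t))}.Countable :=
    countable_sep_lt_of_forall_lt_imp_le fun t₁ ht₁ t₂ ht₂ h₁₂ =>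
      hφanti.antitoneOn.le_rearrOn_comp_of_lt hE hEfin hfmeas hfnonneg hI hrange hφnonneg
        ht₁.1 h₁₂ ht₂.2
  filter_upwards [ae_restrict_mem measurableSet_Ioo,
    ae_restrict_of_ae (hcount.ae_notMem volume)] with t ht hgood
  exact (hφanti.antitoneOn.rearrOn_comp_le hE hEfin hfmeas hfnonneg hI hrange hφnonneg
    ht.1 ht.2).antisymm (not_lt.1 fun h => hgood ⟨ht, h⟩)

theorem stmt_3 {n : ℕ} (E : Set (Fin n → ℝ)) (hE : MeasurableSet E)
    (hEfin : volume E < ⊤)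
    (f : (Fin n → ℝ) → ℝ) (hfmeas : Measurable f) (hfnonneg : ∀ x ∈ E, 0 ≤ f x)
    (I : Set ℝ) (hI : I.OrdConnected) (hrange : f '' E ⊆ I)
    (φ : ℝ → ℝ) (hφcont : ContinuousOn φ I) (hφanti : StrictAntiOn φ I)
    (hφnonneg : ∀ y ∈ I, 0 ≤ φ y) :
    ∀ᵐ t ∂(volume.restrict (Ioo (0 : ℝ) (volume E).toReal)),
      rearrOn E (φ ∘ f) t = φ (rearrOn E f ((volume E).toReal - t)) :=
  stmt_3_general E hE hEfin f hfmeas hfnonneg I hI hrange φ hφanti hφnonneg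
end

section
/- Define f on (0,1) by f(x) = 1 for x ∈ (0,1/2] and f(x) = 2 for x ∈ (1/2,1), and let ψ(x) := 1/f(x). Then the equality ψ^*(t) = 1/f^*(1-t) fails at t = 1/2; specifically ψ^*(1/2) = 1/2 while 1/f^*(1/2) = 1. -/
/-! If `|g| ≥ c` on `E` and `|g| ≤ c` off a set of measure at most `t < |E|`, then `c` is the
least admissible level, so `g^*(t) = c`. For `f` the exceptional set is `(1/2, 1)`, for `ψ` it
is `(0, 1/2]`; both have measure exactly `1/2`, so at `t = 1/2` both rearrangements take their
lower value, whereas `1 / f^*(1 - t)` picks the upper value of `ψ`. -/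

open MeasureTheory Set

noncomputable def fex : ℝ → ℝ := fun x => if x ∈ Ioc (0 : ℝ) (1 / 2) then 1 else 2

noncomputable def ψex : ℝ → ℝ := fun x => 1 / fex x

theorem rearrOn_eq_of_le_abs_of_abs_le_outside {α : Type*} [MeasureSpace α] {E B : Set α}
    {g : α → ℝ} {c t : ℝ} (hc : 0 < c) (hlow : ∀ x ∈ E, c ≤ |g x|)
    (hhigh : ∀ x ∈ E \ B, |g x| ≤ c) (hB : volume B ≤ ENNReal.ofReal t)
    (hE : ENNReal.ofReal t < volume E) : rearrOn E g t = c := by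
  refine IsLeast.csInf_eq ⟨⟨hc, ?_⟩, ?_⟩
  · refine le_trans (measure_mono fun x ⟨hxE, hx⟩ => ?_) hB
    by_contra hxB
    exact (hhigh x ⟨hxE, hxB⟩).not_gt hx
  · rintro a ⟨-, ha⟩
    by_contra! hac
    have hsuper : E ⊆ {x ∈ E | a < |g x|} := fun x hx => ⟨hx, hac.trans_le (hlow x hx)⟩
    exact (measure_mono hsuper).trans ha |>.not_gt hE

theorem fex_of_mem {x : ℝ} (hx : x ∈ Ioc (0 : ℝ) (1 / 2)) : fex x = 1 := if_pos hx

theorem fex_of_not_mem {x : ℝ} (hx : x ∉ Ioc (0 : ℝ) (1 / 2)) : fex x = 2 := if_neg hx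

theorem one_le_fex (x : ℝ) : 1 ≤ fex x := by
  unfold fex; split <;> norm_num

theorem volume_Ioo_zero_one_gt_half : ENNReal.ofReal (1 / 2) < volume (Ioo (0 : ℝ) 1) := by
  rw [Real.volume_Ioo, ENNReal.ofReal_lt_ofReal_iff] <;> norm_num

theorem rearrOn_fex_half : rearrOn (Ioo (0 : ℝ) 1) fex (1 / 2) = 1 := by
  refine rearrOn_eq_of_le_abs_of_abs_le_outside (B := Ioo (1 / 2) 1) one_pos
    (fun x _ => (one_le_fex x).trans (le_abs_self _)) (fun x ⟨hxE, hxB⟩ => ?_) ?_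
    volume_Ioo_zero_one_gt_half
  · have hx : x ∈ Ioc (0 : ℝ) (1 / 2) := ⟨hxE.1, not_lt.1 fun h => hxB ⟨h, hxE.2⟩⟩
    rw [fex_of_mem hx, abs_one]
  · rw [Real.volume_Ioo]; norm_num

theorem rearrOn_ψex_half : rearrOn (Ioo (0 : ℝ) 1) ψex (1 / 2) = 1 / 2 := by
  refine rearrOn_eq_of_le_abs_of_abs_le_outside (B := Ioc 0 (1 / 2)) one_half_pos
    (fun x _ => ?_) (fun x ⟨_, hxB⟩ => ?_) (by rw [Real.volume_Ioc]; norm_num)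
    volume_Ioo_zero_one_gt_half
  · by_cases hx : x ∈ Ioc (0 : ℝ) (1 / 2)
    · rw [ψex, fex_of_mem hx]; norm_num
    · rw [ψex, fex_of_not_mem hx]; norm_num
  · rw [ψex, fex_of_not_mem hxB]; norm_num

theorem stmt_4 :
    rearrOn (Ioo (0 : ℝ) 1) ψex (1 / 2) = 1 / 2 ∧
    1 / rearrOn (Ioo (0 : ℝ) 1) fex (1 - 1 / 2) = 1 ∧
    rearrOn (Ioo (0 : ℝ) 1) ψex (1 / 2) ≠
      1 / rearrOn (Ioo (0 : ℝ) 1) fex (1 - 1 / 2) := by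
  have hf : rearrOn (Ioo (0 : ℝ) 1) fex (1 - 1 / 2) = 1 := by
    norm_num only [rearrOn_fex_half]
  refine ⟨rearrOn_ψex_half, by rw [hf]; norm_num, by rw [rearrOn_ψex_half, hf]; norm_num⟩
end

section
/- Let Q ⊂ ℝ^n be a cube with 0 ∉ Q, and let 0 < δ < 1. Then there exists a measurable subset E ⊂ Q with |E| = δ|Q| such that for all x ∈ Q and all y ∈ Q \ E, |x|/|y| ≤ √n / δ. -/
open MeasureTheory Set

/-- An open axis-parallel cube in Euclidean space `ℝⁿ`. -/
def cubeE (n : ℕ) (a : Fin n → ℝ) (h : ℝ) : Set (EuclideanSpace ℝ (Fin n)) :=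
  {x | ∀ i, x i ∈ Ioo (a i) (a i + h)}

/-!
Let `j` be a coordinate along which the cube reaches farthest from the origin, say to distance
`R`, so that `‖x‖ ≤ √n R` on `Q`. Some side interval of `Q` misses `0`, hence `R ≥ h`, and this
forces the `j`-th side interval to miss `0` as well. Let `E` be the slab of `Q` whose `j`-th
coordinate lies in the piece of relative length `δ` of that interval nearest to `0`: every
`y ∈ Q \ E` then has `|y j| ≥ δ R`.
-/

lemma max_abs_lt_iff_zero_mem_Ioo {c h : ℝ} : max |c| |c + h| < h ↔ (0 : ℝ) ∈ Ioo c (c + h) := by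
  simp only [max_lt_iff, abs_lt, mem_Ioo]
  constructor
  · rintro ⟨⟨hc, -⟩, -, hch⟩
    constructor <;> linarith
  · rintro ⟨hc, hch⟩
    exact ⟨⟨by linarith, by linarith⟩, by linarith, by linarith⟩

lemma exists_Ioo_subset_mul_max_abs_le {c h δ : ℝ} (hh : 0 ≤ h) (hδ : δ ∈ Icc (0 : ℝ) 1)
    (h0 : (0 : ℝ) ∉ Ioo c (c + h)) :
    ∃ s, c ≤ s ∧ s + δ * h ≤ c + h ∧
      ∀ t ∈ Ioo c (c + h), t ∉ Ioo s (s + δ * h) → δ * max |c| |c + h| ≤ |t| := by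
  obtain ⟨hδ0, hδ1⟩ := hδ
  have hδh : δ * h ≤ h := mul_le_of_le_one_left hh hδ1
  rcases le_or_gt 0 c with hc | hc
  · refine ⟨c, le_rfl, by linarith, fun t ⟨hct, _⟩ ht => ?_⟩
    have ht : c + δ * h ≤ t := by simpa [hct] using ht
    rw [abs_of_nonneg hc, abs_of_nonneg (by linarith), abs_of_nonneg (by linarith),
      max_eq_right (by linarith)]
    nlinarith
  · have hch : c + h ≤ 0 := by
      by_contra! hch
      exact h0 ⟨hc, hch⟩
    refine ⟨c + h - δ * h, by linarith, by linarith, fun t ⟨_, htc⟩ ht => ?_⟩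
    have ht : t ≤ c + h - δ * h := by simpa [htc] using ht
    rw [abs_of_neg hc, abs_of_nonpos hch, abs_of_nonpos (by linarith), max_eq_left (by linarith)]
    nlinarith

lemma EuclideanSpace.norm_le_sqrt_card_mul {ι : Type*} [Fintype ι] {x : EuclideanSpace ℝ ι}
    {M : ℝ} (hM : 0 ≤ M) (hx : ∀ i, |x i| ≤ M) : ‖x‖ ≤ √(Fintype.card ι) * M := by
  rw [EuclideanSpace.norm_eq, ← Real.sqrt_sq hM, ← Real.sqrt_mul (Nat.cast_nonneg _)]
  gcongr
  calc ∑ i, ‖x i‖ ^ 2 ≤ ∑ _ : ι, M ^ 2 := by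
        gcongr with i
        exact hx i
    _ = _ := by simp

lemma EuclideanSpace.volume_setOf_forall_mem {ι : Type*} [Fintype ι] (S : ι → Set ℝ)
    (hS : ∀ i, MeasurableSet (S i)) :
    volume {x : EuclideanSpace ℝ ι | ∀ i, x i ∈ S i} = ∏ i, volume (S i) := by
  rw [← volume_pi_pi]
  convert (PiLp.volume_preserving_ofLp ι).measure_preimage
    (MeasurableSet.univ_pi hS).nullMeasurableSet using 2
  ext; simp

lemma volume_setOf_mem_cubeE_apply_mem_Ioo {n : ℕ} {a : Fin n → ℝ} {h : ℝ} (hh : 0 ≤ h)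
    (j : Fin n) {s d : ℝ} (hd : 0 ≤ d) (hs : a j ≤ s) (hsd : s + d ≤ a j + h) :
    volume {y ∈ cubeE n a h | y j ∈ Ioo s (s + d)} = ENNReal.ofReal (d * h ^ (n - 1)) := by
  classical
  have hset : {y ∈ cubeE n a h | y j ∈ Ioo s (s + d)} =
      {y : EuclideanSpace ℝ (Fin n) | ∀ i,
        y i ∈ Function.update (fun i => Ioo (a i) (a i + h)) j (Ioo s (s + d)) i} := by
    ext y
    change _ ∧ _ ↔ ∀ i, _
    rw [Function.forall_update_iff _ fun i S => y i ∈ S]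
    refine ⟨fun ⟨hy, hyj⟩ => ⟨hyj, fun i _ => hy i⟩, fun ⟨hyj, hy⟩ => ⟨fun i => ?_, hyj⟩⟩
    rcases eq_or_ne i j with rfl | hi
    · exact Ioo_subset_Ioo hs (by linarith) hyj
    · exact hy i hi
  rw [hset, EuclideanSpace.volume_setOf_forall_mem _ fun i => by
    rcases eq_or_ne i j with rfl | hi <;> simp [*]]
  rw [Finset.prod_congr rfl fun i _ => Function.apply_update (fun _ => volume) _ j _ i,
    Finset.prod_update_of_mem (Finset.mem_univ j)]
  simp only [Real.volume_Ioo, add_sub_cancel_left, Finset.prod_const]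
  rw [ENNReal.ofReal_mul hd, ENNReal.ofReal_pow hh, Finset.card_sdiff_of_subset (by simp),
    Finset.card_univ, Fintype.card_fin, Finset.card_singleton]

theorem stmt_14_general {n : ℕ} (a : Fin n → ℝ) (h : ℝ) (hh : 0 < h)
    (h0 : (0 : EuclideanSpace ℝ (Fin n)) ∉ cubeE n a h)
    (δ : ℝ) (hδ : δ ∈ Ioo (0:ℝ) 1) :
    ∃ E : Set (EuclideanSpace ℝ (Fin n)), MeasurableSet E ∧ E ⊆ cubeE n a h ∧
      volume E = ENNReal.ofReal (δ * h ^ n) ∧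
      ∀ x ∈ cubeE n a h, ∀ y ∈ cubeE n a h \ E, ‖x‖ / ‖y‖ ≤ Real.sqrt n / δ := by
  obtain ⟨i₀, hi₀⟩ : ∃ i, (0 : ℝ) ∉ Ioo (a i) (a i + h) := by simpa [cubeE] using h0
  have : Nonempty (Fin n) := ⟨i₀⟩
  obtain ⟨j, hj⟩ := Finite.exists_max fun i => max |a i| |a i + h|
  set R := max |a j| |a j + h|
  have hhR : h ≤ R := (not_lt.1 (mt max_abs_lt_iff_zero_mem_Ioo.1 hi₀)).trans (hj i₀)
  have hj0 : (0 : ℝ) ∉ Ioo (a j) (a j + h) :=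
    fun h0j => (max_abs_lt_iff_zero_mem_Ioo.2 h0j).not_ge hhR
  obtain ⟨s, has, hsh, hfar⟩ := exists_Ioo_subset_mul_max_abs_le hh.le (Ioo_subset_Icc_self hδ) hj0
  refine ⟨{y ∈ cubeE n a h | y j ∈ Ioo s (s + δ * h)}, ?_, fun y hy => hy.1, ?_, ?_⟩
  · simp only [cubeE]
    measurability
  · rw [volume_setOf_mem_cubeE_apply_mem_Ioo hh.le j (by nlinarith [hδ.1]) has hsh, mul_assoc,
      ← pow_succ', Nat.sub_add_cancel j.pos]
  · rintro x hx y ⟨hyQ, hyE⟩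
    have hx_le : ‖x‖ ≤ √n * R := by
      simpa using EuclideanSpace.norm_le_sqrt_card_mul (hh.le.trans hhR)
        fun i => (abs_le_max_abs_abs (hx i).1.le (hx i).2.le).trans (hj i)
    have hy_ge : δ * R ≤ ‖y‖ :=
      (hfar (y j) (hyQ j) fun hyj => hyE ⟨hyQ, hyj⟩).trans (PiLp.norm_apply_le y j)
    have hR : 0 < R := hh.trans_le hhR
    calc ‖x‖ / ‖y‖ ≤ √n * R / (δ * R) :=
          div_le_div₀ (by positivity) hx_le (mul_pos hδ.1 hR) hy_ge
      _ = √n / δ := mul_div_mul_right _ _ hR.ne'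

theorem stmt_14 {n : ℕ} (hn : 0 < n) (a : Fin n → ℝ) (h : ℝ) (hh : 0 < h)
    (h0 : (0 : EuclideanSpace ℝ (Fin n)) ∉ cubeE n a h)
    (δ : ℝ) (hδ : δ ∈ Ioo (0:ℝ) 1) :
    ∃ E : Set (EuclideanSpace ℝ (Fin n)), MeasurableSet E ∧ E ⊆ cubeE n a h ∧
      volume E = ENNReal.ofReal (δ * h ^ n) ∧
      ∀ x ∈ cubeE n a h, ∀ y ∈ cubeE n a h \ E, ‖x‖ / ‖y‖ ≤ Real.sqrt n / δ :=
  stmt_14_general a h hh h0 δ hδ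
end

section
/- Let p : ℝ^n → ℝ be measurable with 0 < p_- ≤ p_+ < ∞, let 0 < δ ≤ e^{-8 p_+}, and let Q ⊂ ℝ^n be a cube. Then ∫_Q ∫_Q δ^{1/|p(x)-p(y)|} dx dy ≤ |Q| · inf_{ν ∈ [p_-, p_+]} ∫_Q δ^{1/(2|p(x)-ν|)} dx, with the convention δ^{1/0} = δ^∞ = 0. -/
/-!
For `0 < δ < 1` and `t ≥ 0`, `δ ^ (1 / t) = expNegInvGlue (t / log (1 / δ))`, the convention
`δ ^ (1 / 0) = 0` included. The function `expNegInvGlue` is nondecreasing, and convex on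
`(-∞, 1/2]` because its second derivative is `x⁻⁴ (1 - 2x) e^{-1/x}`. As
`|p x - p y| ≤ |p x - ν| + |p y - ν|` and `δ ≤ e^{-8 p₊}` keeps all arguments below `1/2`, the
kernel at `(x, y)` is at most the mean of `δ ^ (1 / (2 |p x - ν|))` and `δ ^ (1 / (2 |p y - ν|))`;
integrating over `Q × Q` gives the bound for each `ν`.
-/

open MeasureTheory Set

/-- An open axis-parallel cube in `ℝⁿ`. -/
def cube (n : ℕ) (a : Fin n → ℝ) (h : ℝ) : Set (Fin n → ℝ) :=
  univ.pi fun i => Ioo (a i) (a i + h)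

open Polynomial in
theorem convexOn_expNegInvGlue : ConvexOn ℝ (Iic (1 / 2)) expNegInvGlue := by
  have hf' (x : ℝ) : HasDerivAt expNegInvGlue (x⁻¹ ^ 2 * expNegInvGlue x) x := by
    simpa using expNegInvGlue.hasDerivAt_polynomial_eval_inv_mul 1 x
  have hf'' (x : ℝ) : HasDerivAt (fun x => x⁻¹ ^ 2 * expNegInvGlue x)
      (x⁻¹ ^ 2 * (x⁻¹ ^ 2 - 2 * x⁻¹) * expNegInvGlue x) x := by
    convert expNegInvGlue.hasDerivAt_polynomial_eval_inv_mul (X ^ 2 : ℝ[X]) x using 1 <;>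
      norm_num
  refine convexOn_of_hasDerivWithinAt2_nonneg (convex_Iic _)
    (expNegInvGlue.contDiff (n := 0)).continuous.continuousOn
    (fun x _ => (hf' x).hasDerivWithinAt) (fun x _ => (hf'' x).hasDerivWithinAt) ?_
  rw [interior_Iic]
  intro x hx
  rcases le_or_gt x 0 with hx0 | hx0
  · simp [expNegInvGlue.zero_of_nonpos hx0]
  · have : 2 ≤ x⁻¹ := by rw [le_inv_comm₀ two_pos hx0]; linarith [hx.out]
    have : 0 ≤ x⁻¹ ^ 2 - 2 * x⁻¹ := by nlinarith
    have := expNegInvGlue.nonneg x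
    positivity

theorem expNegInvGlue_le_add_div_two {u v w : ℝ} (hv : v ≤ 1 / 2) (hw : w ≤ 1 / 2)
    (hu : u ≤ (v + w) / 2) :
    expNegInvGlue u ≤ (expNegInvGlue v + expNegInvGlue w) / 2 := by
  have hmid := convexOn_expNegInvGlue.2 hv hw (by norm_num : (0 : ℝ) ≤ 1 / 2)
    (by norm_num : (0 : ℝ) ≤ 1 / 2) (by norm_num)
  simp only [smul_eq_mul] at hmid
  calc expNegInvGlue u ≤ expNegInvGlue (1 / 2 * v + 1 / 2 * w) :=
        expNegInvGlue.monotone (by linarith)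
    _ ≤ 1 / 2 * expNegInvGlue v + 1 / 2 * expNegInvGlue w := hmid
    _ = _ := by ring

theorem expNegInvGlue_abs_sub_div_le {a b ν c : ℝ} (hc : 0 < c) (ha : 4 * |a - ν| ≤ c)
    (hb : 4 * |b - ν| ≤ c) :
    expNegInvGlue (|a - b| / c) ≤
      (expNegInvGlue (2 * |a - ν| / c) + expNegInvGlue (2 * |b - ν| / c)) / 2 := by
  refine expNegInvGlue_le_add_div_two ?_ ?_ ?_
  · rw [div_le_iff₀ hc]; linarith
  · rw [div_le_iff₀ hc]; linarith
  · calc |a - b| / c ≤ (|a - ν| + |b - ν|) / c := by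
          gcongr; simpa [abs_sub_comm ν b] using abs_sub_le a ν b
      _ = _ := by ring

section RpowOneDiv

variable {δ : ℝ} (hδ0 : 0 < δ) (hδ1 : δ < 1)
include hδ0 hδ1

theorem ite_rpow_one_div_eq_expNegInvGlue {t : ℝ} (ht : 0 ≤ t) :
    (if t = 0 then 0 else δ ^ (1 / t)) = expNegInvGlue (t / -Real.log δ) := by
  have hlog : 0 < -Real.log δ := neg_pos.2 (Real.log_neg hδ0 hδ1)
  rcases ht.eq_or_lt with rfl | ht
  · simp
  · rw [if_neg ht.ne', expNegInvGlue, if_neg (div_pos ht hlog).not_ge, Real.rpow_def_of_pos hδ0]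
    congr 1
    field_simp

theorem ite_rpow_one_div_abs_sub (a b : ℝ) :
    (if a = b then 0 else δ ^ (1 / |a - b|)) = expNegInvGlue (|a - b| / -Real.log δ) := by
  rw [← ite_rpow_one_div_eq_expNegInvGlue hδ0 hδ1 (abs_nonneg _)]
  simp [sub_eq_zero]

theorem ite_rpow_one_div_two_mul_abs_sub (a b : ℝ) :
    (if a = b then 0 else δ ^ (1 / (2 * |a - b|))) =
      expNegInvGlue (2 * |a - b| / -Real.log δ) := by
  rw [← ite_rpow_one_div_eq_expNegInvGlue hδ0 hδ1 (by positivity)]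
  simp [sub_eq_zero]

end RpowOneDiv

theorem integral_integral_le_measureReal_mul_integral {α : Type*} [MeasurableSpace α]
    {μ : Measure α} [IsFiniteMeasure μ] {F : α → α → ℝ} {g : α → ℝ} (hg : Integrable g μ)
    (hF : ∀ x y, 0 ≤ F x y) (hFg : ∀ x y, F x y ≤ (g x + g y) / 2) :
    ∫ x, ∫ y, F x y ∂μ ∂μ ≤ μ.real univ * ∫ x, g x ∂μ := by
  have hinner (x : α) : ∫ y, F x y ∂μ ≤ (μ.real univ * g x + ∫ y, g y ∂μ) / 2 := by
    calc ∫ y, F x y ∂μ ≤ ∫ y, (g x + g y) / 2 ∂μ :=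
          integral_mono_of_nonneg (ae_of_all _ (hF x))
            ((integrable_const _).add hg |>.div_const 2) (ae_of_all _ (hFg x))
      _ = _ := by
          rw [integral_div, integral_add (integrable_const _) hg, integral_const, smul_eq_mul]
  calc ∫ x, ∫ y, F x y ∂μ ∂μ ≤ ∫ x, (μ.real univ * g x + ∫ y, g y ∂μ) / 2 ∂μ :=
        integral_mono_of_nonneg (ae_of_all _ fun x => integral_nonneg (hF x))
          ((hg.const_mul _).add (integrable_const _) |>.div_const 2) (ae_of_all _ hinner)
    _ = μ.real univ * ∫ x, g x ∂μ := by
        rw [integral_div, integral_add (hg.const_mul _) (integrable_const _), integral_const_mul,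
          integral_const, smul_eq_mul]
        ring

theorem volume_cube (n : ℕ) (a : Fin n → ℝ) (h : ℝ) :
    volume (cube n a h) = ENNReal.ofReal h ^ n := by
  simp [cube, volume_pi_pi, Real.volume_Ioo]

theorem measureReal_cube (n : ℕ) (a : Fin n → ℝ) {h : ℝ} (hh : 0 ≤ h) :
    volume.real (cube n a h) = h ^ n := by
  rw [measureReal_def, volume_cube, ENNReal.toReal_pow, ENNReal.toReal_ofReal hh]

instance (n : ℕ) (a : Fin n → ℝ) (h : ℝ) : IsFiniteMeasure (volume.restrict (cube n a h)) :=
  isFiniteMeasure_restrict.2 (by simp [volume_cube])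

theorem stmt_15 {n : ℕ} (p : (Fin n → ℝ) → ℝ) (hpmeas : Measurable p)
    (pm pp : ℝ) (hpm : 0 < pm) (hbounds : ∀ x, pm ≤ p x ∧ p x ≤ pp)
    (δ : ℝ) (hδ0 : 0 < δ) (hδ : δ ≤ Real.exp (-8 * pp))
    (a0 : Fin n → ℝ) (h : ℝ) (hh : 0 < h) :
    (∫ x in cube n a0 h, ∫ y in cube n a0 h,
        (if p x = p y then 0 else δ ^ (1 / |p x - p y|))) ≤
      h ^ n * ⨅ ν : Icc pm pp,
        ∫ x in cube n a0 h,
          (if p x = (ν : ℝ) then 0 else δ ^ (1 / (2 * |p x - (ν : ℝ)|))) := by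
  have hpmpp : pm ≤ pp := (hbounds 0).1.trans (hbounds 0).2
  have hδ1 : δ < 1 := hδ.trans_lt (Real.exp_lt_one_iff.2 (by linarith))
  have hlog : 8 * pp ≤ -Real.log δ := by
    linarith [Real.log_le_log hδ0 hδ, Real.log_exp (-8 * pp)]
  have hclose (x) (ν : Icc pm pp) : 4 * |p x - ν| ≤ -Real.log δ := by
    obtain ⟨hx, hx'⟩ := hbounds x
    obtain ⟨hν, hν'⟩ := ν.2
    have : |p x - ν| ≤ pp := abs_sub_le_iff.2 ⟨by linarith, by linarith⟩
    linarith
  have : Nonempty (Icc pm pp) := ⟨⟨pm, left_mem_Icc.2 hpmpp⟩⟩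
  rw [Real.mul_iInf_of_nonneg (by positivity)]
  refine le_ciInf fun ν => ?_
  simp only [ite_rpow_one_div_abs_sub hδ0 hδ1, ite_rpow_one_div_two_mul_abs_sub hδ0 hδ1]
  rw [← measureReal_cube n a0 hh.le, ← measureReal_restrict_apply_univ]
  refine integral_integral_le_measureReal_mul_integral ?_ (fun _ _ => expNegInvGlue.nonneg _)
    fun x y => expNegInvGlue_abs_sub_div_le (by linarith) (hclose x ν) (hclose y ν)
  refine Integrable.of_bound (by fun_prop) (expNegInvGlue (1 / 2)) (ae_of_all _ fun x => ?_)
  rw [Real.norm_of_nonneg (expNegInvGlue.nonneg _)]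
  exact expNegInvGlue.monotone <| (div_le_iff₀ (by linarith)).2 (by linarith [hclose x ν])
end
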